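/- The theory coe_2^{l'} of the local two-sided coercion operator (in its context-expanded form) is definable from the global theory coe_2 + β_2: for a type family D over x : I and a telescope y_1 : B_1, …, y_k : B_k, points i, j : I, a term d of D at i, and terms b_1, …, b_k instantiating the telescope at j, one can construct a term of D at j instantiated accordingly, satisfying the computation rule that coercion from left to left along the telescope instance is the identity; i.e., there is a morphism of theories coe_2^{l'} + β_2^l → coe_2 + β_2. -/

import Mathlib

/-- A (shallow) model of a type theory with an interval type `I` (endpoints `lf`, `rt`),
the connection `sq`, heterogeneous path types `Path` and coercion `coe1`
(`coe0` is the special case transporting from `lf` to `rt`). -/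
structure CTT where
  Ty : Type
  Tm : Ty → Type
  I : Ty
  lf : Tm I
  rt : Tm I
  sq : Tm I → Tm I → Tm I
  sq_il : ∀ i, sq i lf = lf
  sq_lj : ∀ j, sq lf j = lf
  sq_rj : ∀ j, sq rt j = j
  Path : (A : Tm I → Ty) → Tm (A lf) → Tm (A rt) → Ty
  path : {A : Tm I → Ty} → (f : ∀ i, Tm (A i)) → Tm (Path A (f lf) (f rt))
  pat : {A : Tm I → Ty} → {a : Tm (A lf)} → {a' : Tm (A rt)} →
      Tm (Path A a a') → (i : Tm I) → Tm (A i)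
  pat_beta : ∀ {A : Tm I → Ty} (f : ∀ i, Tm (A i)) (i : Tm I), pat (path f) i = f i
  pat_lf : ∀ {A : Tm I → Ty} {a : Tm (A lf)} {a' : Tm (A rt)} (p : Tm (Path A a a')),
      pat p lf = a
  pat_rt : ∀ {A : Tm I → Ty} {a : Tm (A lf)} {a' : Tm (A rt)} (p : Tm (Path A a a')),
      pat p rt = a'
  path_eta : ∀ {A : Tm I → Ty} {a : Tm (A lf)} {a' : Tm (A rt)} (p : Tm (Path A a a')),
      HEq (path (fun i => pat p i)) p
  coe1 : (D : Tm I → Ty) → Tm (D lf) → (i : Tm I) → Tm (D i)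
  coe1_lf : ∀ D d, coe1 D d lf = d

namespace CTT

variable (M : CTT)

/-- Homogeneous path types `a ⇝ a'`. -/
def HP (A : M.Ty) (a a' : M.Tm A) : M.Ty := M.Path (fun _ => A) a a'

/-- `refl`. -/
def rfl' {A : M.Ty} (a : M.Tm A) : M.Tm (M.HP A a a) := M.path (fun _ => a)

/-- Coercion from the fiber over `left` to the fiber over `right`. -/
def coe0 (D : M.Tm M.I → M.Ty) (d : M.Tm (D M.lf)) : M.Tm (D M.rt) := M.coe1 D d M.rt

/-- Concatenation of homogeneous paths. -/
def conc {A : M.Ty} {a b c : M.Tm A} (p : M.Tm (M.HP A a b)) (q : M.Tm (M.HP A b c)) :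
    M.Tm (M.HP A a c) :=
  cast (show M.Tm (M.HP A a (M.pat q M.rt)) = M.Tm (M.HP A a c) by
      exact congrArg (fun x => M.Tm (M.HP A a x)) (M.pat_rt q))
    (M.coe1 (fun i => M.HP A a (M.pat q i))
      (cast (show M.Tm (M.HP A a b) = M.Tm (M.HP A a (M.pat q M.lf)) by
        exact congrArg (fun x => M.Tm (M.HP A a x)) (M.pat_lf q).symm) p) M.rt)

/-- Inversion of homogeneous paths. -/
def symm' {A : M.Ty} {a b : M.Tm A} (p : M.Tm (M.HP A a b)) : M.Tm (M.HP A b a) :=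
  cast (show M.Tm (M.HP A (M.pat p M.rt) a) = M.Tm (M.HP A b a) by
      exact congrArg (fun x => M.Tm (M.HP A x a)) (M.pat_rt p))
    (M.coe1 (fun i => M.HP A (M.pat p i) a)
      (cast (show M.Tm (M.HP A a a) = M.Tm (M.HP A (M.pat p M.lf) a) by
        exact congrArg (fun x => M.Tm (M.HP A x a)) (M.pat_lf p).symm)
        (M.rfl' a)) M.rt)

/-- Action of a function on paths. -/
def apm {A B : M.Ty} (g : M.Tm A → M.Tm B) {a a' : M.Tm A} (p : M.Tm (M.HP A a a')) :
    M.Tm (M.HP B (g a) (g a')) :=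
  cast (show M.Tm (M.HP B (g (M.pat p M.lf)) (g (M.pat p M.rt))) = M.Tm (M.HP B (g a) (g a'))
      by exact congrArg₂ (fun x y => M.Tm (M.HP B (g x) (g y))) (M.pat_lf p) (M.pat_rt p))
    (M.path (fun i => g (M.pat p i)))

end CTT

/-- Telescopes `y₁ : B₁, …, y_k : B_k` over a variable `x : I`, together with their types of
environments (instances of the telescope at a point of the interval).
`(TeleI M k).1` is the type of `k`-telescopes over `I`; `(TeleI M k).2 t x` is the type of
instances of the telescope `t` at `x : I`. -/
def TeleI (M : CTT) : ℕ → Σ T : Type 1, T → M.Tm M.I → Type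
  | 0 => ⟨PUnit, fun _ _ => PUnit⟩
  | k + 1 =>
    let p := TeleI M k
    ⟨Σ t : p.1, (x : M.Tm M.I) → p.2 t x → M.Ty,
     fun t x => Σ ρ : p.2 t.1 x, M.Tm (t.2 x ρ)⟩

/- Coercing the telescope instance itself along `x` (the terms `b'_m`) reduces local coercion to
`coe₂` on the single family `x ↦ D x (b'(x))`; by `β₂` at every level the transported instance
starts at the given one, which is what makes `β₂^l` hold. -/

namespace TeleI

variable {M : CTT}
  (coe2 : (D : M.Tm M.I → M.Ty) → (i : M.Tm M.I) → M.Tm (D i) → (j : M.Tm M.I) → M.Tm (D j))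
  (hβ2 : ∀ D i d, coe2 D i d i = d)

def transport : (k : ℕ) → (t : (TeleI M k).1) →
    {Tr : (j : M.Tm M.I) → (TeleI M k).2 t j → (x : M.Tm M.I) → (TeleI M k).2 t x //
      ∀ j ρ, Tr j ρ j = ρ}
  | 0, _ => ⟨fun _ _ _ => PUnit.unit, fun _ _ => rfl⟩
  | k + 1, t =>
    let Tr := transport k t.1
    ⟨fun j ρ x => ⟨Tr.1 j ρ.1 x,
        coe2 (fun x => t.2 x (Tr.1 j ρ.1 x)) j ((Tr.2 j ρ.1).symm ▸ ρ.2) x⟩,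
      fun j ρ => Sigma.ext (Tr.2 j ρ.1) (by simp only [hβ2]; exact eqRec_heq_self _ _)⟩

def coeLocal {k : ℕ} {t : (TeleI M k).1} (D : (x : M.Tm M.I) → (TeleI M k).2 t x → M.Ty)
    (i : M.Tm M.I) (d : (ρ : (TeleI M k).2 t i) → M.Tm (D i ρ))
    (j : M.Tm M.I) (ρ' : (TeleI M k).2 t j) : M.Tm (D j ρ') :=
  let Tr := transport coe2 hβ2 k t
  Tr.2 j ρ' ▸ coe2 (fun x => D x (Tr.1 j ρ' x)) i (d (Tr.1 j ρ' i)) j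

theorem coeLocal_self {k : ℕ} {t : (TeleI M k).1}
    (D : (x : M.Tm M.I) → (TeleI M k).2 t x → M.Ty) (i : M.Tm M.I)
    (d : (ρ : (TeleI M k).2 t i) → M.Tm (D i ρ)) (ρ : (TeleI M k).2 t i) :
    coeLocal coe2 hβ2 D i d i ρ = d ρ := by
  let Tr := transport coe2 hβ2 k t
  simp only [coeLocal, hβ2]
  exact eq_of_heq ((eqRec_heq_self _ _).trans (congr_arg_heq d (Tr.2 i ρ)))

end TeleI

/-- The local two-sided coercion operator `coe₂^{l'}` (context-expanded
form) is definable from the global theory `coe₂ + β₂`: for a type family `D` over `x : I`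
and a telescope `y₁:B₁,…,y_k:B_k`, points `i j : I`, a term `d` of `D` at `i` (depending on
the telescope instance), and an instance `ρ'` of the telescope at `j`, one constructs a term
of `D` at `j` instantiated accordingly, satisfying the computation rule that coercion from a
point to itself along the same telescope instance is the identity; i.e. there is a morphism
of theories `coe₂^{l'} + β₂^l → coe₂ + β₂`. -/
theorem stmt9 (M : CTT)
    (coe2 : (D : M.Tm M.I → M.Ty) → (i : M.Tm M.I) → M.Tm (D i) → (j : M.Tm M.I) → M.Tm (D j))
    (hβ2 : ∀ D i d, coe2 D i d i = d) :
    ∀ (k : ℕ) (t : (TeleI M k).1) (D : (x : M.Tm M.I) → (TeleI M k).2 t x → M.Ty),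
      ∃ C : (i : M.Tm M.I) → ((ρ : (TeleI M k).2 t i) → M.Tm (D i ρ)) →
            (j : M.Tm M.I) → (ρ' : (TeleI M k).2 t j) → M.Tm (D j ρ'),
        ∀ i d ρ, C i d i ρ = d ρ :=
  fun _ _ D => ⟨TeleI.coeLocal coe2 hβ2 D, TeleI.coeLocal_self coe2 hβ2 D⟩
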